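/- arXiv:0707.1270 — 7 statements merged into one kernel-verified Lean document; each statement's English description precedes it below -/
import Mathlib

section
/- Suppose w, u : (r_h,∞) → ℝ are C¹, satisfy σNw' + wu = 0 and (r/((2p-1)σ))·[(1-w²)^{p-1}u]' = ((2p-1)σ/r)·(1-w²)^p /(2p-1) (i.e. the selfduality system), with σ, N > 0 on (r_h,∞), 0 < w < 1 everywhere, w(∞)=1 and u(∞)=0, w(r_h)=0. Then u(r) < 0 and w'(r) > 0 for all r > r_h. -/
open Set Filter

theorem stmt5 (p : ℕ) (hp : 1 ≤ p) (rh : ℝ) (w u σ N : ℝ → ℝ)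
    (hσpos : ∀ r ∈ Ioi rh, 0 < σ r) (hNpos : ∀ r ∈ Ioi rh, 0 < N r)
    (hw : ∀ r ∈ Ioi rh, HasDerivAt w (deriv w r) r)
    (hu : ∀ r ∈ Ioi rh, HasDerivAt u (deriv u r) r)
    (hwrange : ∀ r ∈ Ioi rh, 0 < w r ∧ w r < 1)
    (hode1 : ∀ r ∈ Ioi rh, σ r * N r * deriv w r + w r * u r = 0)
    (hode2 : ∀ r ∈ Ioi rh,
      r * deriv (fun s => (1 - w s^2)^(p-1) * u s) r
        = ((2*(p:ℝ) - 1) * σ r^2 / r) * (1 - w r^2)^p)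
    (hwinf : Tendsto w atTop (nhds 1)) (huinf : Tendsto u atTop (nhds 0))
    (hwrh : Tendsto w (nhdsWithin rh (Ioi rh)) (nhds 0)) :
    ∀ r ∈ Ioi rh, u r < 0 ∧ 0 < deriv w r := by
  set f : ℝ → ℝ := fun s => (1 - w s^2)^(p-1) * u s with hf
  have hdiff : ∀ r ∈ Ioi rh, DifferentiableAt ℝ f r := by
    intro r hr
    rw [hf]
    exact (((differentiableAt_const (1:ℝ)).sub
      (((hw r hr).differentiableAt).pow 2)).pow (p-1)).mul ((hu r hr).differentiableAt)
  have hp1 : (1:ℝ) ≤ (p:ℝ) := by exact_mod_cast hp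
  have hdpos : ∀ y ∈ Ioi rh, y ≠ 0 → 0 < deriv f y := by
    intro y hy hy0
    obtain ⟨hw0, hw1⟩ := hwrange y hy
    have hwsq : 0 < 1 - w y ^ 2 := by nlinarith
    have hK : 0 < (2*(p:ℝ)-1) * σ y^2 * (1 - w y^2)^p :=
      mul_pos (mul_pos (by linarith) (pow_pos (hσpos y hy) 2)) (pow_pos hwsq p)
    have h2 := hode2 y hy
    have h3 : deriv f y * y^2 = (2*(p:ℝ)-1) * σ y^2 * (1 - w y^2)^p := by
      field_simp at h2
      linear_combination h2
    nlinarith [sq_nonneg y, pow_pos (pow_pos (abs_pos.mpr hy0) 1) 1]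
  have hflim : Tendsto f atTop (nhds 0) := by
    have h1 : Tendsto (fun r => (1 - w r^2)^(p-1) * u r) atTop
        (nhds (((1:ℝ) - 1^2)^(p-1) * 0)) :=
      ((tendsto_const_nhds.sub (hwinf.pow 2)).pow (p-1)).mul huinf
    rw [hf]
    simpa using h1
  have hSM : ∀ x, rh < x → 0 ≤ x → StrictMonoOn f (Ici x) := by
    intro x hx hx0
    apply strictMonoOn_of_deriv_pos (convex_Ici x)
    · intro y hy
      exact (hdiff y (lt_of_lt_of_le hx hy)).continuousAt.continuousWithinAt
    · intro y hy
      rw [interior_Ici] at hy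
      exact hdpos y (lt_trans hx hy) (ne_of_gt (lt_of_le_of_lt hx0 hy))
  have hle : ∀ x, rh < x → 0 < x → f x ≤ 0 := by
    intro x hx hx0
    have hmono := hSM x hx hx0.le
    apply ge_of_tendsto hflim
    filter_upwards [eventually_ge_atTop x] with y hy
    rcases eq_or_lt_of_le hy with h | h
    · exact le_of_eq (by rw [h])
    · exact (hmono self_mem_Ici (mem_Ici.mpr h.le) h).le
  have hlt_pos : ∀ x, rh < x → 0 < x → f x < 0 := by
    intro x hx hx0
    have h1 : f x < f (x+1) := hSM x hx hx0.le self_mem_Ici (mem_Ici.mpr (by linarith)) (by linarith)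
    have h2 : f (x+1) ≤ 0 := hle (x+1) (by linarith) (by linarith)
    linarith
  have hfneg : ∀ x ∈ Ioi rh, f x < 0 := by
    intro x hx
    rcases lt_or_ge 0 x with h | h
    · exact hlt_pos x hx h
    · have hrh0 : rh < 0 := lt_of_lt_of_le hx h
      have hmono0 : MonotoneOn f (Icc x 0) := by
        apply monotoneOn_of_deriv_nonneg (convex_Icc x 0)
        · intro y hy
          exact (hdiff y (lt_of_lt_of_le hx hy.1)).continuousAt.continuousWithinAt
        · intro y hy
          rw [interior_Icc] at hy
          exact (hdiff y (lt_trans hx hy.1)).differentiableWithinAt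
        · intro y hy
          rw [interior_Icc] at hy
          exact (hdpos y (lt_trans hx hy.1) (ne_of_lt hy.2)).le
      have h1 : f x ≤ f 0 := hmono0 ⟨le_refl x, h⟩ ⟨h, le_refl 0⟩ h
      have h2 : f 0 < f 1 := hSM 0 hrh0 le_rfl self_mem_Ici (mem_Ici.mpr zero_le_one) one_pos
      have h3 : f 1 ≤ 0 := hle 1 (by linarith) one_pos
      linarith
  intro r hr
  have hfr := hfneg r hr
  obtain ⟨hw0, hw1⟩ := hwrange r hr
  have hpow : 0 < (1 - w r^2)^(p-1) := pow_pos (by nlinarith) _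
  have hu_neg : u r < 0 := by
    by_contra hcon
    push_neg at hcon
    have : 0 ≤ f r := by rw [hf]; exact mul_nonneg hpow.le hcon
    linarith
  refine ⟨hu_neg, ?_⟩
  have hσ := hσpos r hr
  have hN := hNpos r hr
  have hode := hode1 r hr
  by_contra hd
  push_neg at hd
  have h1 : σ r * N r * deriv w r ≤ 0 :=
    mul_nonpos_of_nonneg_of_nonpos (mul_pos hσ hN).le hd
  nlinarith [mul_pos hw0 (neg_pos.mpr hu_neg)]
end

section
/- Under the hypotheses of the shooting problem f'' - g(t)f' = h(t)R(f), f(t₀) = -a, f'(t₀) = b with g ≥ 0, h > 0 continuous and R increasing differentiable with R(0)=0, define S⁻ = {b : ∃t>t₀, f'(t;b)<0}, S⁰ = {b : f'(t;b)>0 and f(t;b)≤0 ∀t>t₀}, S⁺ = {b : f'(t;b)>0 ∀t≥t₀ and f(t;b)>0 for some t>t₀}. Then ℝ is the disjoint union of S⁻, S⁰, S⁺. -/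
/-!
If `f'` never becomes negative, it is positive on `[t₀, ∞)`. At a zero `s` of `f'` the equation
reads `f''(s) = h(s) R(f(s))`, and `s` minimises `f'` on `[t₀, ∞)`. For `s = t₀` this forces
`R(-a) ≥ 0`, which is impossible. For `s > t₀` Fermat's rule gives `f''(s) = 0`, hence
`f(s) = 0`: the trajectory `(f, f')` reaches the equilibrium `(0, 0)` of the first-order system,
which is Lipschitz on bounded sets, so by backward uniqueness `f = 0` on `[t₀, s]`, contradicting
`f(t₀) = -a`. The three sets are then separated by the signs of `f'` and `f`.
-/

open Set Filter Topology Metric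
open scoped NNReal

lemma HasDerivAt.nonneg_of_forall_gt_le {φ : ℝ → ℝ} {d s : ℝ} (hφ : HasDerivAt φ d s)
    (hmin : ∀ t > s, φ s ≤ φ t) : 0 ≤ d := by
  refine ge_of_tendsto ((hasDerivAt_iff_tendsto_slope.mp hφ).mono_left (nhdsGT_le_nhdsNE s)) ?_
  filter_upwards [self_mem_nhdsWithin] with t (ht : s < t)
  rw [slope_def_field]
  exact div_nonneg (sub_nonneg.2 (hmin t ht)) (sub_nonneg.2 ht.le)

def phaseField (g h R : ℝ → ℝ) (t : ℝ) (p : ℝ × ℝ) : ℝ × ℝ :=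
  (p.2, g t * p.2 + h t * R p.1)

lemma lipschitzOnWith_phaseField {g h R : ℝ → ℝ} {t : ℝ} {I : Set ℝ} {L Cg Ch : ℝ≥0}
    (hR : LipschitzOnWith L R I) (hg : ‖g t‖₊ ≤ Cg) (hh : ‖h t‖₊ ≤ Ch) :
    LipschitzOnWith (max 1 (Cg + Ch * L)) (phaseField g h R t) (I ×ˢ univ) := by
  refine LipschitzOnWith.of_dist_le_mul fun p hp q hq => ?_
  have hR' : |R p.1 - R q.1| ≤ L * |p.1 - q.1| := by
    simpa only [Real.dist_eq] using hR.dist_le_mul _ hp.1 _ hq.1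
  have hg' : |g t| ≤ Cg := hg
  have hh' : |h t| ≤ Ch := hh
  have h1 : |p.1 - q.1| ≤ dist p q := by
    rw [Prod.dist_eq, Real.dist_eq]; exact le_max_left _ _
  have h2 : |p.2 - q.2| ≤ dist p q := by
    rw [Prod.dist_eq, Real.dist_eq p.2]; exact le_max_right _ _
  have hsecond : |g t * p.2 + h t * R p.1 - (g t * q.2 + h t * R q.1)|
      ≤ (Cg + Ch * L) * dist p q :=
    calc |g t * p.2 + h t * R p.1 - (g t * q.2 + h t * R q.1)|
        = |g t * (p.2 - q.2) + h t * (R p.1 - R q.1)| := by ring_nf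
      _ ≤ |g t| * |p.2 - q.2| + |h t| * |R p.1 - R q.1| := by
        rw [← abs_mul, ← abs_mul]; exact abs_add_le _ _
      _ ≤ Cg * dist p q + Ch * (L * dist p q) := by
        gcongr
        exact hR'.trans (by gcongr)
      _ = (Cg + Ch * L) * dist p q := by ring
  rw [Prod.dist_eq, Real.dist_eq, Real.dist_eq, NNReal.coe_max, NNReal.coe_one]
  simp only [phaseField]
  refine max_le ?_ ?_
  · exact h2.trans (le_mul_of_one_le_left dist_nonneg (le_max_left _ _))
  · exact hsecond.trans (by gcongr; exact_mod_cast le_max_right _ _)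

section SecondOrder

variable {g h R F F' F'' : ℝ → ℝ} {t₀ s : ℝ}

theorem eqOn_zero_of_eq_zero_of_deriv_eq_zero (hg : Continuous g) (hh : Continuous h)
    (hR : ContDiff ℝ 1 R) (hR0 : R 0 = 0)
    (hF : ∀ t, HasDerivAt F (F' t) t) (hF' : ∀ t, HasDerivAt F' (F'' t) t)
    (hode : ∀ t ∈ Ioc t₀ s, F'' t - g t * F' t = h t * R (F t))
    (hFs : F s = 0) (hF's : F' s = 0) : EqOn F 0 (Icc t₀ s) := by
  have hFc : Continuous F := continuous_iff_continuousAt.2 fun t => (hF t).continuousAt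
  have hF'c : Continuous F' := continuous_iff_continuousAt.2 fun t => (hF' t).continuousAt
  obtain ⟨r, hr0, hr⟩ :=
    ((isCompact_Icc (a := t₀) (b := s)).image hFc).isBounded.subset_closedBall_lt 0 0
  obtain ⟨L, hL⟩ := hR.contDiffOn.exists_lipschitzOnWith one_ne_zero (convex_closedBall 0 r)
    (isCompact_closedBall 0 r)
  obtain ⟨Cg, hCg⟩ := (isCompact_Icc (a := t₀) (b := s)).bddAbove_image hg.nnnorm.continuousOn
  obtain ⟨Ch, hCh⟩ := (isCompact_Icc (a := t₀) (b := s)).bddAbove_image hh.nnnorm.continuousOn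
  have hsol : ∀ t ∈ Ioc t₀ s, HasDerivWithinAt (fun t => (F t, F' t))
      (phaseField g h R t (F t, F' t)) (Iic t) t := by
    intro t ht
    have hF''t : F'' t = g t * F' t + h t * R (F t) := by linarith [hode t ht]
    simpa only [phaseField, hF''t] using ((hF t).prodMk (hF' t)).hasDerivWithinAt
  have hzero : ∀ t ∈ Ioc t₀ s, HasDerivWithinAt (fun _ => (0 : ℝ × ℝ))
      (phaseField g h R t 0) (Iic t) t := by
    intro t _
    simpa only [phaseField, Prod.fst_zero, Prod.snd_zero, hR0, mul_zero, add_zero,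
      Prod.mk_zero_zero] using hasDerivWithinAt_const t (Iic t) (0 : ℝ × ℝ)
  have hmem : ∀ t ∈ Ioc t₀ s, t ∈ Icc t₀ s := fun _ ht => Ioc_subset_Icc_self ht
  have hunique := ODE_solution_unique_of_mem_Icc_left (s := fun _ => closedBall 0 r ×ˢ univ)
    (fun t ht => lipschitzOnWith_phaseField hL (hCg (mem_image_of_mem _ (hmem t ht)))
      (hCh (mem_image_of_mem _ (hmem t ht))))
    (hFc.prodMk hF'c).continuousOn hsol
    (fun t ht => ⟨hr (mem_image_of_mem F (hmem t ht)), trivial⟩)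
    continuousOn_const hzero (fun _ _ => ⟨mem_closedBall_self hr0.le, trivial⟩)
    (by simp [hFs, hF's])
  exact fun t ht => congrArg Prod.fst (hunique ht)

theorem deriv_pos_of_forall_deriv_nonneg (hg : Continuous g) (hh : Continuous h)
    (hhpos : ∀ t, 0 < h t) (hR : ContDiff ℝ 1 R) (hRmono : StrictMono R) (hR0 : R 0 = 0)
    (hF : ∀ t, HasDerivAt F (F' t) t) (hF' : ∀ t, HasDerivAt F' (F'' t) t)
    (hode : ∀ t ≥ t₀, F'' t - g t * F' t = h t * R (F t)) (hFt₀ : F t₀ < 0)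
    (hF'nonneg : ∀ t > t₀, 0 ≤ F' t) : ∀ t ≥ t₀, 0 < F' t := by
  have hF'c : Continuous F' := continuous_iff_continuousAt.2 fun t => (hF' t).continuousAt
  have hmin : ∀ t ≥ t₀, 0 ≤ F' t := by
    intro t ht
    rcases ht.eq_or_lt with rfl | ht
    · exact ge_of_tendsto (hF'c.continuousWithinAt (s := Ioi t₀))
        (eventually_nhdsWithin_of_forall hF'nonneg)
    · exact hF'nonneg t ht
  intro s hs
  refine (hmin s hs).lt_of_ne fun hs0 => ?_
  have hF''s : F'' s = h s * R (F s) := by rw [← hode s hs, ← hs0]; ring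
  rcases hs.eq_or_lt with rfl | hlt
  · have hF''nonneg : 0 ≤ F'' t₀ :=
      (hF' t₀).nonneg_of_forall_gt_le fun t ht => hs0 ▸ hmin t ht.le
    have hRneg : R (F t₀) < 0 := hR0 ▸ hRmono hFt₀
    nlinarith [hhpos t₀]
  · have hF''zero : F'' s = 0 := IsLocalMin.hasDerivAt_eq_zero
      (mem_of_superset (Ioi_mem_nhds hlt) fun t ht => hs0 ▸ hmin t (le_of_lt ht)) (hF' s)
    have hFs : F s = 0 := hRmono.injective <| by
      rw [hR0]
      exact (mul_eq_zero.1 (hF''s ▸ hF''zero)).resolve_left (hhpos s).ne'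
    exact hFt₀.ne (eqOn_zero_of_eq_zero_of_deriv_eq_zero hg hh hR hR0 hF hF'
      (fun t ht => hode t ht.1.le) hFs hs0.symm ⟨le_rfl, hs⟩)

end SecondOrder

theorem stmt7_general (g h R : ℝ → ℝ) (t₀ a : ℝ) (ha : 0 < a)
    (hg : Continuous g)
    (hh : Continuous h) (hhpos : ∀ t, 0 < h t)
    (hR : ContDiff ℝ 1 R) (hRmono : StrictMono R) (hR0 : R 0 = 0)
    (f : ℝ → ℝ → ℝ)
    (hf1 : ∀ b t, HasDerivAt (f b) (deriv (f b) t) t)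
    (hf2 : ∀ b t, HasDerivAt (deriv (f b)) (deriv (deriv (f b)) t) t)
    (hode : ∀ b, ∀ t ≥ t₀, deriv (deriv (f b)) t - g t * deriv (f b) t = h t * R (f b t))
    (hinit : ∀ b, f b t₀ = -a ∧ deriv (f b) t₀ = b) :
    let Sm := {b : ℝ | ∃ t > t₀, deriv (f b) t < 0}
    let S0 := {b : ℝ | ∀ t > t₀, 0 < deriv (f b) t ∧ f b t ≤ 0}
    let Sp := {b : ℝ | (∀ t ≥ t₀, 0 < deriv (f b) t) ∧ ∃ t > t₀, 0 < f b t}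
    Sm ∪ S0 ∪ Sp = Set.univ ∧ Disjoint Sm S0 ∧ Disjoint Sm Sp ∧ Disjoint S0 Sp := by
  intro Sm S0 Sp
  have hpos : ∀ b ∉ Sm, ∀ t ≥ t₀, 0 < deriv (f b) t := fun b hb =>
    deriv_pos_of_forall_deriv_nonneg hg hh hhpos hR hRmono hR0 (hf1 b) (hf2 b) (hode b)
      (by rw [(hinit b).1]; linarith) fun t ht => not_lt.1 fun hneg => hb ⟨t, ht, hneg⟩
  refine ⟨eq_univ_of_forall fun b => ?_, disjoint_left.2 ?_, disjoint_left.2 ?_,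
    disjoint_left.2 ?_⟩
  · by_cases hb : b ∈ Sm
    · exact Or.inl (Or.inl hb)
    by_cases hp : ∃ t > t₀, 0 < f b t
    · exact Or.inr ⟨hpos b hb, hp⟩
    · push Not at hp
      exact Or.inl (Or.inr fun t ht => ⟨hpos b hb t ht.le, hp t ht⟩)
  · rintro b ⟨t, ht, hneg⟩ hb
    exact (hb t ht).1.not_gt hneg
  · rintro b ⟨t, ht, hneg⟩ hb
    exact (hb.1 t ht.le).not_gt hneg
  · rintro b hb ⟨-, t, ht, hpos⟩
    exact (hb t ht).2.not_gt hpos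

theorem stmt7 (g h R : ℝ → ℝ) (t₀ a : ℝ) (ha : 0 < a)
    (hg : Continuous g) (hgnn : ∀ t, 0 ≤ g t)
    (hh : Continuous h) (hhpos : ∀ t, 0 < h t)
    (hR : ContDiff ℝ 1 R) (hRmono : StrictMono R) (hR0 : R 0 = 0)
    (f : ℝ → ℝ → ℝ)
    (hf1 : ∀ b t, HasDerivAt (f b) (deriv (f b) t) t)
    (hf2 : ∀ b t, HasDerivAt (deriv (f b)) (deriv (deriv (f b)) t) t)
    (hode : ∀ b, ∀ t ≥ t₀, deriv (deriv (f b)) t - g t * deriv (f b) t = h t * R (f b t))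
    (hinit : ∀ b, f b t₀ = -a ∧ deriv (f b) t₀ = b) :
    let Sm := {b : ℝ | ∃ t > t₀, deriv (f b) t < 0}
    let S0 := {b : ℝ | ∀ t > t₀, 0 < deriv (f b) t ∧ f b t ≤ 0}
    let Sp := {b : ℝ | (∀ t ≥ t₀, 0 < deriv (f b) t) ∧ ∃ t > t₀, 0 < f b t}
    Sm ∪ S0 ∪ Sp = Set.univ ∧ Disjoint Sm S0 ∧ Disjoint Sm Sp ∧ Disjoint S0 Sp :=
  stmt7_general g h R t₀ a ha hg hh hhpos hR hRmono hR0 f hf1 hf2 hode hinit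
end

section
/- For the shooting problem f'' - g(t)f' = h(t)R(f), f(t₀)=-a, f'(t₀)=b, with g ≥ 0, h > 0 continuous and R increasing with R(0)=0: for every a > 0 and t₁ > t₀, if b satisfies b + R(-a)∫_{t₀}^{t₁} h(s)ds > 0 and -a + b(t₁-t₀) + R(-a)∫_{t₀}^{t₁}∫_{t₀}^{s₂} h(s₁)ds₁ds₂ > 0, then b ∈ S⁺; in particular S⁺ is nonempty. -/
/-- If `φ` has derivative `φ'` everywhere and `φ' ≥ 0` on `[x,y]`, then `φ x ≤ φ y`. -/
lemma stmt9_deriv_le_aux (φ φ' : ℝ → ℝ) (hφ : ∀ t, HasDerivAt φ (φ' t) t)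
    {x y : ℝ} (hxy : x ≤ y) (hnn : ∀ t ∈ Set.Icc x y, 0 ≤ φ' t) : φ x ≤ φ y := by
  have hmono : MonotoneOn φ (Set.Icc x y) := by
    apply monotoneOn_of_deriv_nonneg (convex_Icc x y)
    · exact fun t _ => (hφ t).continuousAt.continuousWithinAt
    · exact fun t _ => (hφ t).differentiableAt.differentiableWithinAt
    · intro t ht
      rw [interior_Icc] at ht
      rw [(hφ t).deriv]
      exact hnn t (Set.Ioo_subset_Icc_self ht)
  exact hmono (Set.left_mem_Icc.2 hxy) (Set.right_mem_Icc.2 hxy) hxy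

theorem stmt9 (g h R f : ℝ → ℝ) (t₀ t₁ a b : ℝ) (ha : 0 < a) (ht₁ : t₀ < t₁)
    (hg : Continuous g) (hgnn : ∀ t, 0 ≤ g t)
    (hh : Continuous h) (hhpos : ∀ t, 0 < h t)
    (hR : ContDiff ℝ 1 R) (hRmono : StrictMono R) (hR0 : R 0 = 0)
    (hf1 : ∀ t, HasDerivAt f (deriv f t) t)
    (hf2 : ∀ t, HasDerivAt (deriv f) (deriv (deriv f) t) t)
    (hode : ∀ t ≥ t₀, deriv (deriv f) t - g t * deriv f t = h t * R (f t))
    (hinit : f t₀ = -a) (hinit' : deriv f t₀ = b)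
    (hb1 : 0 < b + R (-a) * ∫ s in t₀..t₁, h s)
    (hb2 : 0 < -a + b * (t₁ - t₀) + R (-a) * ∫ s₂ in t₀..t₁, ∫ s₁ in t₀..s₂, h s₁) :
    (∀ t ≥ t₀, 0 < deriv f t) ∧ ∃ t > t₀, 0 < f t := by
  have hRa : R (-a) < 0 := by
    have := hRmono (show (-a : ℝ) < 0 by linarith)
    rwa [hR0] at this
  -- FTC derivatives
  have hH : ∀ t, HasDerivAt (fun u => ∫ s in t₀..u, h s) (h t) t := fun t =>
    intervalIntegral.integral_hasDerivAt_right (hh.intervalIntegrable t₀ t)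
      (hh.stronglyMeasurableAtFilter _ _) hh.continuousAt
  have hHc : Continuous (fun u => ∫ s in t₀..u, h s) := by
    rw [continuous_iff_continuousAt]; exact fun t => (hH t).continuousAt
  have hH2 : ∀ t, HasDerivAt (fun u => ∫ s₂ in t₀..u, ∫ s₁ in t₀..s₂, h s₁)
      (∫ s in t₀..t, h s) t := fun t =>
    intervalIntegral.integral_hasDerivAt_right (hHc.intervalIntegrable t₀ t)
      (hHc.stronglyMeasurableAtFilter _ _) hHc.continuousAt
  have hHt₀ : (∫ s in t₀..t₀, h s) = 0 := intervalIntegral.integral_same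
  have hH2t₀ : (∫ s₂ in t₀..t₀, ∫ s₁ in t₀..s₂, h s₁) = 0 := intervalIntegral.integral_same
  have hInn : 0 ≤ ∫ s in t₀..t₁, h s :=
    intervalIntegral.integral_nonneg ht₁.le fun s _ => (hhpos s).le
  have hbpos : 0 < b := by nlinarith
  -- key lemma: as long as f ≤ 0 and f' ≥ 0 on [t₀,u], the double-integration bounds hold
  have keyA : ∀ u, t₀ ≤ u → (∀ t ∈ Set.Icc t₀ u, f t ≤ 0) →
      (∀ t ∈ Set.Icc t₀ u, 0 ≤ deriv f t) →
      (b + R (-a) * ∫ s in t₀..u, h s) ≤ deriv f u ∧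
      (-a + b * (u - t₀) + R (-a) * ∫ s₂ in t₀..u, ∫ s₁ in t₀..s₂, h s₁) ≤ f u := by
    intro u hu hfle hf'
    have hfge : ∀ t ∈ Set.Icc t₀ u, -a ≤ f t := by
      intro t ht
      rw [← hinit]
      exact stmt9_deriv_le_aux f (deriv f) hf1 ht.1
        (fun s hs => hf' s ⟨hs.1, le_trans hs.2 ht.2⟩)
    have hstep1 : ∀ v ∈ Set.Icc t₀ u, b + R (-a) * (∫ s in t₀..v, h s) ≤ deriv f v := by
      intro v hv
      have key := stmt9_deriv_le_aux (fun t => deriv f t - R (-a) * ∫ s in t₀..t, h s)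
        (fun t => deriv (deriv f) t - R (-a) * h t)
        (fun t => (hf2 t).sub ((hH t).const_mul (R (-a)))) hv.1 ?_
      · simp only [hHt₀, mul_zero, sub_zero, hinit'] at key
        linarith
      · intro t ht
        show 0 ≤ deriv (deriv f) t - R (-a) * h t
        have htu : t ∈ Set.Icc t₀ u := ⟨ht.1, le_trans ht.2 hv.2⟩
        have hode' := hode t ht.1
        have h2 : R (-a) ≤ R (f t) := hRmono.monotone (hfge t htu)
        have h1 : 0 ≤ g t * deriv f t := mul_nonneg (hgnn t) (hf' t htu)
        nlinarith [mul_nonneg (hhpos t).le (sub_nonneg.2 h2)]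
    constructor
    · exact hstep1 u ⟨hu, le_refl u⟩
    · have key := stmt9_deriv_le_aux
        (fun t => f t - b * (t - t₀) - R (-a) * ∫ s₂ in t₀..t, ∫ s₁ in t₀..s₂, h s₁)
        (fun t => deriv f t - b - R (-a) * ∫ s in t₀..t, h s)
        (fun t => by
          have h1 : HasDerivAt (fun t : ℝ => b * (t - t₀)) b t := by
            simpa using ((hasDerivAt_id t).sub_const t₀).const_mul b
          exact ((hf1 t).sub h1).sub ((hH2 t).const_mul (R (-a)))) hu ?_
      · simp only [hH2t₀, mul_zero, sub_zero, sub_self, hinit] at key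
        linarith
      · intro t ht
        show 0 ≤ deriv f t - b - R (-a) * ∫ s in t₀..t, h s
        have := hstep1 t ht
        linarith
  -- Part 1: f' > 0 on [t₀, ∞)
  have hdfc : Continuous (deriv f) := by
    rw [continuous_iff_continuousAt]; exact fun t => (hf2 t).continuousAt
  have hfc : Continuous f := by
    rw [continuous_iff_continuousAt]; exact fun t => (hf1 t).continuousAt
  have part1 : ∀ t ≥ t₀, 0 < deriv f t := by
    by_contra hcon
    push_neg at hcon
    obtain ⟨T₀, hT₀ge, hT₀⟩ := hcon
    have hScl : IsClosed (Set.Ici t₀ ∩ {t | deriv f t ≤ 0}) :=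
      isClosed_Ici.inter (isClosed_le hdfc continuous_const)
    have hne : (Set.Ici t₀ ∩ {t | deriv f t ≤ 0}).Nonempty := ⟨T₀, hT₀ge, hT₀⟩
    have hbdd : BddBelow (Set.Ici t₀ ∩ {t | deriv f t ≤ 0}) := ⟨t₀, fun t ht => ht.1⟩
    set T := sInf (Set.Ici t₀ ∩ {t | deriv f t ≤ 0}) with hTdef
    have hTS : T ∈ Set.Ici t₀ ∩ {t | deriv f t ≤ 0} := hScl.csInf_mem hne hbdd
    have hTt₀ : t₀ ≤ T := hTS.1
    have hT0 : deriv f T ≤ 0 := hTS.2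
    have hTne : t₀ < T := lt_of_le_of_ne hTt₀ (by
      intro heq
      rw [← heq, hinit'] at hT0
      linarith)
    have hlt : ∀ t, t₀ ≤ t → t < T → 0 < deriv f t := by
      intro t h1 h2
      by_contra hcneg
      push_neg at hcneg
      exact absurd (csInf_le hbdd ⟨h1, hcneg⟩) (not_le.2 h2)
    have hTzero : deriv f T = 0 := by
      refine le_antisymm hT0 ?_
      have htend : Filter.Tendsto (deriv f) (nhdsWithin T (Set.Iio T)) (nhds (deriv f T)) :=
        (hdfc.continuousAt).tendsto.mono_left nhdsWithin_le_nhds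
      refine ge_of_tendsto htend ?_
      have hmem : Set.Ioo t₀ T ∈ nhdsWithin T (Set.Iio T) := by
        rw [← Set.Ioi_inter_Iio]
        exact Filter.inter_mem (mem_nhdsWithin_of_mem_nhds (Ioi_mem_nhds hTne))
          self_mem_nhdsWithin
      filter_upwards [hmem] with t ht
      exact (hlt t ht.1.le ht.2).le
    have hf'nnT : ∀ t ∈ Set.Icc t₀ T, 0 ≤ deriv f t := by
      intro t ht
      rcases lt_or_eq_of_le ht.2 with hc | hc
      · exact (hlt t ht.1 hc).le
      · rw [hc, hTzero]
    by_cases hfT : f T ≤ 0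
    · have hfleT : ∀ t ∈ Set.Icc t₀ T, f t ≤ 0 := by
        intro t ht
        have : f t ≤ f T := stmt9_deriv_le_aux f (deriv f) hf1 ht.2
          (fun s hs => hf'nnT s ⟨le_trans ht.1 hs.1, hs.2⟩)
        linarith
      rcases le_or_gt T t₁ with hTt₁ | ht₁T
      · have hk := (keyA T hTt₀ hfleT hf'nnT).1
        have hHm : (∫ s in t₀..T, h s) ≤ ∫ s in t₀..t₁, h s := by
          have hsplit : (∫ s in t₀..T, h s) + (∫ s in T..t₁, h s) = ∫ s in t₀..t₁, h s :=
            intervalIntegral.integral_add_adjacent_intervals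
              (hh.intervalIntegrable _ _) (hh.intervalIntegrable _ _)
          have : 0 ≤ ∫ s in T..t₁, h s :=
            intervalIntegral.integral_nonneg hTt₁ fun s _ => (hhpos s).le
          linarith
        have : R (-a) * (∫ s in t₀..t₁, h s) ≤ R (-a) * ∫ s in t₀..T, h s :=
          mul_le_mul_of_nonpos_left hHm hRa.le
        rw [hTzero] at hk
        linarith
      · have hk := (keyA t₁ ht₁.le
          (fun t ht => hfleT t ⟨ht.1, le_trans ht.2 ht₁T.le⟩)
          (fun t ht => hf'nnT t ⟨ht.1, le_trans ht.2 ht₁T.le⟩)).2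
        have hft₁ : f t₁ ≤ 0 := hfleT t₁ ⟨ht₁.le, ht₁T.le⟩
        linarith
    · push_neg at hfT
      have hZcl : IsClosed (Set.Icc t₀ T ∩ {t | f t ≤ 0}) :=
        isClosed_Icc.inter (isClosed_le hfc continuous_const)
      have hZne : (Set.Icc t₀ T ∩ {t | f t ≤ 0}).Nonempty :=
        ⟨t₀, ⟨le_refl _, hTt₀⟩, by simp only [Set.mem_setOf_eq, hinit]; linarith⟩
      have hZbdd : BddAbove (Set.Icc t₀ T ∩ {t | f t ≤ 0}) := ⟨T, fun t ht => ht.1.2⟩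
      set σ := sSup (Set.Icc t₀ T ∩ {t | f t ≤ 0}) with hσdef
      have hσZ : σ ∈ Set.Icc t₀ T ∩ {t | f t ≤ 0} := hZcl.csSup_mem hZne hZbdd
      have hσt₀ : t₀ ≤ σ := hσZ.1.1
      have hσT : σ < T := lt_of_le_of_ne hσZ.1.2 (by
        intro heq
        have := hσZ.2
        rw [heq] at this
        exact absurd this (not_le.2 hfT))
      have hfposI : ∀ t, σ < t → t ≤ T → 0 < f t := by
        intro t h1 h2
        by_contra hcneg
        push_neg at hcneg
        have : t ∈ Set.Icc t₀ T ∩ {t | f t ≤ 0} := ⟨⟨le_trans hσt₀ h1.le, h2⟩, hcneg⟩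
        exact absurd (le_csSup hZbdd this) (not_le.2 h1)
      set m := (σ + T) / 2 with hmdef
      have hm1 : σ < m := by rw [hmdef]; linarith
      have hm2 : m < T := by rw [hmdef]; linarith
      have hkey : deriv f m ≤ deriv f T := by
        apply stmt9_deriv_le_aux (deriv f) (deriv (deriv f)) hf2 hm2.le
        intro t ht
        have ht₀ : t₀ ≤ t := le_trans hσt₀ (le_trans hm1.le ht.1)
        have hode' := hode t ht₀
        have hfpos : 0 < f t := hfposI t (lt_of_lt_of_le hm1 ht.1) ht.2
        have hRf : 0 ≤ R (f t) := by
          have := hRmono hfpos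
          rw [hR0] at this
          exact this.le
        have hf'nn := hf'nnT t ⟨ht₀, ht.2⟩
        nlinarith [mul_nonneg (hgnn t) hf'nn, mul_nonneg (hhpos t).le hRf]
      have := hlt m (le_trans hσt₀ hm1.le) hm2
      rw [hTzero] at hkey
      linarith
  refine ⟨part1, ?_⟩
  by_contra hc
  push_neg at hc
  have hfle : ∀ t ∈ Set.Icc t₀ t₁, f t ≤ 0 := by
    intro t ht
    rcases eq_or_lt_of_le ht.1 with hcase | hcase
    · rw [← hcase, hinit]; linarith
    · exact hc t hcase
  have hk := (keyA t₁ ht₁.le hfle (fun t ht => (part1 t ht.1).le)).2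
  have := hc t₁ ht₁
  linarith
end

section
/- If b ∈ S⁰ for the shooting problem (so f(t;b) is increasing and nonpositive on (t₀,∞)), and additionally g(t) → g(∞) and h(t) → h(∞) > 0 as t → ∞ with R(s) < 0 for s < 0, then f(t;b) → 0 as t → ∞. -/
/-!
Since `f' > 0` and `f ≤ 0`, `f` increases to a limit `η ≤ 0`. If `η < 0`, the forcing term
`h R(f)` tends to `h(∞) R(η) < 0` while `g` stays below some `M ≥ 0`, so eventually
`f'' ≤ M f' + c` with `c < 0`. Then `f' - M f - c t` is nonincreasing, and as `f` is bounded
above, `f'(t) ≤ C + c t`, which eventually contradicts `f' > 0`.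
-/

open Filter Set Topology

theorem MonotoneOn.tendsto_atTop_csSup_image_Ici {α β : Type*} [LinearOrder α]
    [ConditionallyCompleteLinearOrder β] [TopologicalSpace β] [OrderTopology β]
    {f : α → β} {a : α} (hf : MonotoneOn f (Ici a)) (hbdd : BddAbove (f '' Ici a)) :
    Tendsto f atTop (𝓝 (sSup (f '' Ici a))) := by
  have hrange : range (fun t => f (max t a)) = f '' Ici a := by
    ext y
    constructor
    · rintro ⟨t, rfl⟩
      exact ⟨max t a, le_max_right t a, rfl⟩
    · rintro ⟨t, ht, rfl⟩
      exact ⟨t, congrArg f (max_eq_left ht)⟩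
  have hmono : Monotone fun t => f (max t a) := fun s t hst =>
    hf (le_max_right s a) (le_max_right t a) (max_le_max hst le_rfl)
  refine (tendsto_atTop_isLUB hmono ?_).congr' ?_
  · rw [hrange]
    exact isLUB_csSup ((nonempty_Ici).image f) hbdd
  · filter_upwards [eventually_ge_atTop a] with t ht
    exact congrArg f (max_eq_left ht)

theorem exists_tendsto_atTop_of_deriv_pos_of_le {f : ℝ → ℝ} {t₀ B : ℝ} (hf : Differentiable ℝ f)
    (hpos : ∀ t > t₀, 0 < deriv f t) (hle : ∀ t > t₀, f t ≤ B) :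
    ∃ η ≤ B, Tendsto f atTop (𝓝 η) := by
  have hmono : MonotoneOn f (Ici (t₀ + 1)) := by
    refine (strictMonoOn_of_deriv_pos (convex_Ici _) hf.continuous.continuousOn ?_).monotoneOn
    intro t ht
    rw [interior_Ici] at ht
    exact hpos t (lt_trans (lt_add_one t₀) ht)
  have hbdd : BddAbove (f '' Ici (t₀ + 1)) := by
    refine ⟨B, ?_⟩
    rintro _ ⟨t, ht, rfl⟩
    exact hle t (lt_of_lt_of_le (lt_add_one t₀) ht)
  have hlim := hmono.tendsto_atTop_csSup_image_Ici hbdd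
  refine ⟨_, le_of_tendsto hlim ?_, hlim⟩
  filter_upwards [eventually_gt_atTop t₀] using hle

theorem not_eventually_pos_of_deriv_le_mul_add_neg {f f' f'' : ℝ → ℝ} {B M c : ℝ}
    (hM : 0 ≤ M) (hc : c < 0)
    (hf : ∀ t, HasDerivAt f (f' t) t) (hf' : ∀ t, HasDerivAt f' (f'' t) t)
    (hB : ∀ᶠ t in atTop, f t ≤ B) (hf'' : ∀ᶠ t in atTop, f'' t ≤ M * f' t + c) :
    ¬ ∀ᶠ t in atTop, 0 < f' t := by
  intro hpos
  obtain ⟨T, hT⟩ := eventually_atTop.1 (hB.and (hf''.and hpos))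
  set φ := fun t => f' t - M * f t - c * t
  have hφ' (t : ℝ) : HasDerivAt φ (f'' t - M * f' t - c) t :=
    ((hf' t).sub ((hf t).const_mul M)).sub (by simpa using (hasDerivAt_id' t).const_mul c)
  have hφ : AntitoneOn φ (Ici T) := by
    refine antitoneOn_of_hasDerivWithinAt_nonpos (convex_Ici T)
      (fun t _ => (hφ' t).continuousAt.continuousWithinAt) (fun t _ => (hφ' t).hasDerivWithinAt) ?_
    intro t ht
    rw [interior_Ici] at ht
    linarith [(hT t ht.le).2.1]
  have hbound : ∀ t ≥ T, f' t ≤ φ T + M * B + c * t := fun t ht => by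
    have hφt : φ t ≤ φ T := hφ self_mem_Ici ht ht
    have hMf : M * f t ≤ M * B := mul_le_mul_of_nonneg_left (hT t ht).1 hM
    simp only [φ] at hφt
    linarith
  have hline : Tendsto (fun t => φ T + M * B + c * t) atTop atBot :=
    tendsto_atBot_add_const_left _ _ (tendsto_id.const_mul_atTop_of_neg hc)
  obtain ⟨t, hneg, htT⟩ := ((hline.eventually_lt_atBot 0).and (eventually_ge_atTop T)).exists
  linarith [hbound t htT, (hT t htT).2.2]

theorem stmt10_general (g h R f : ℝ → ℝ) (t₀ ginf hinf : ℝ)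
    (hRcont : Continuous R) (hRneg : ∀ s < (0:ℝ), R s < 0)
    (hglim : Tendsto g atTop (nhds ginf)) (hhlim : Tendsto h atTop (nhds hinf))
    (hinfpos : 0 < hinf)
    (hf1 : ∀ t, HasDerivAt f (deriv f t) t)
    (hf2 : ∀ t, HasDerivAt (deriv f) (deriv (deriv f) t) t)
    (hode : ∀ t ≥ t₀, deriv (deriv f) t - g t * deriv f t = h t * R (f t))
    (hS0 : ∀ t > t₀, 0 < deriv f t ∧ f t ≤ 0) :
    Tendsto f atTop (nhds 0) := by
  obtain ⟨η, hη0, hη⟩ := exists_tendsto_atTop_of_deriv_pos_of_le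
    (fun t => (hf1 t).differentiableAt) (fun t ht => (hS0 t ht).1) (fun t ht => (hS0 t ht).2)
  obtain rfl | hηneg := hη0.eq_or_lt
  · exact hη
  have hforce : Tendsto (fun t => h t * R (f t)) atTop (𝓝 (hinf * R η)) :=
    hhlim.mul ((hRcont.tendsto η).comp hη)
  have hforce_neg : hinf * R η < 0 := mul_neg_of_pos_of_neg hinfpos (hRneg η hηneg)
  have hforce_le := hforce.eventually_le_const (by linarith : hinf * R η < hinf * R η / 2)
  have hg_le := hglim.eventually_le_const (lt_of_le_of_lt (le_abs_self ginf) (lt_add_one |ginf|))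
  exfalso
  refine not_eventually_pos_of_deriv_le_mul_add_neg (B := 0) (M := |ginf| + 1) (by positivity)
    (by linarith : hinf * R η / 2 < 0) hf1 hf2 ?_ ?_ ?_
  · filter_upwards [eventually_gt_atTop t₀] with t ht using (hS0 t ht).2
  · filter_upwards [eventually_gt_atTop t₀, hforce_le, hg_le] with t ht hRt hgt
    have hgf' : g t * deriv f t ≤ (|ginf| + 1) * deriv f t := by gcongr; exact (hS0 t ht).1.le
    linarith [hode t ht.le]
  · filter_upwards [eventually_gt_atTop t₀] with t ht using (hS0 t ht).1

theorem stmt10 (g h R f : ℝ → ℝ) (t₀ a ginf hinf : ℝ) (ha : 0 < a)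
    (hg : Continuous g) (hgnn : ∀ t, 0 ≤ g t)
    (hh : Continuous h) (hhpos : ∀ t, 0 < h t)
    (hRcont : Continuous R) (hRneg : ∀ s < (0:ℝ), R s < 0)
    (hglim : Tendsto g atTop (nhds ginf)) (hhlim : Tendsto h atTop (nhds hinf))
    (hinfpos : 0 < hinf)
    (hf1 : ∀ t, HasDerivAt f (deriv f t) t)
    (hf2 : ∀ t, HasDerivAt (deriv f) (deriv (deriv f) t) t)
    (hode : ∀ t ≥ t₀, deriv (deriv f) t - g t * deriv f t = h t * R (f t))
    (hinit : f t₀ = -a)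
    (hS0 : ∀ t > t₀, 0 < deriv f t ∧ f t ≤ 0) :
    Tendsto f atTop (nhds 0) :=
  stmt10_general g h R f t₀ ginf hinf hRcont hRneg hglim hhlim hinfpos hf1 hf2 hode hS0
end

section
/- Let f be a solution of f'' - f' + g(t)f' + h(t)(1 - e^{2Q(f)})^p = 0 on [t₀, ∞) with f(t₀) < 0, f'(t₀) < 0, where 0 ≤ g(t) < 1, h(t) > 0 continuous, lim_{t→∞}h(t) = h(∞) > 0, Q: (-∞,0] → (-∞,0] increasing with Q(0)=0, p ≥ 1. Then f(t) < 0 and f'(t) < 0 for all t ≥ t₀, f exists globally, and f(t) → -∞ as t → ∞. -/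
open Filter

theorem stmt14 (p : ℕ) (hp : 1 ≤ p) (g h Q f : ℝ → ℝ) (t₀ hinf : ℝ)
    (hg : Continuous g) (hgrange : ∀ t, 0 ≤ g t ∧ g t < 1)
    (hh : Continuous h) (hhpos : ∀ t, 0 < h t)
    (hhlim : Tendsto h atTop (nhds hinf)) (hinfpos : 0 < hinf)
    (hQmono : StrictMonoOn Q (Set.Iic 0)) (hQ0 : Q 0 = 0)
    (hQrange : ∀ s ≤ (0:ℝ), Q s ≤ 0)
    (hf1 : ∀ t, HasDerivAt f (deriv f t) t)
    (hf2 : ∀ t, HasDerivAt (deriv f) (deriv (deriv f) t) t)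
    (hode : ∀ t ≥ t₀, deriv (deriv f) t - deriv f t + g t * deriv f t
      + h t * (1 - Real.exp (2 * Q (f t)))^p = 0)
    (hi1 : f t₀ < 0) (hi2 : deriv f t₀ < 0) :
    (∀ t ≥ t₀, f t < 0 ∧ deriv f t < 0) ∧ Tendsto f atTop atBot := by
  have contf : Continuous f := continuous_iff_continuousAt.2 fun t => (hf1 t).continuousAt
  have contf' : Continuous (deriv f) :=
    continuous_iff_continuousAt.2 fun t => (hf2 t).continuousAt
  -- positivity of the forcing term when f t < 0
  have hforce : ∀ t, f t < 0 → 0 < h t * (1 - Real.exp (2 * Q (f t))) ^ p := by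
    intro t hft
    have hQ : Q (f t) < 0 := by
      have := hQmono (Set.mem_Iic.2 hft.le) (Set.mem_Iic.2 le_rfl) hft
      rwa [hQ0] at this
    have hexp : Real.exp (2 * Q (f t)) < 1 := Real.exp_lt_one_iff.2 (by linarith)
    exact mul_pos (hhpos t) (pow_pos (by linarith) p)
  -- f'' < 0 when t ≥ t₀, f t < 0, f' t < 0
  have hdd : ∀ t ≥ t₀, f t < 0 → deriv f t < 0 → deriv (deriv f) t < 0 := by
    intro t ht hft hft'
    have h1 := hode t ht
    have h2 := hforce t hft
    have h3 := (hgrange t).2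
    have h4 := (hgrange t).1
    nlinarith [mul_pos (sub_pos.2 h3) (neg_pos.2 hft')]
  -- first part
  have main : ∀ t ≥ t₀, f t < 0 ∧ deriv f t < 0 := by
    by_contra hbad
    push_neg at hbad
    set B : Set ℝ := {t | t₀ ≤ t ∧ (0 ≤ f t ∨ 0 ≤ deriv f t)} with hB
    have hBne : B.Nonempty := by
      obtain ⟨t, ht, hcase⟩ := hbad
      by_cases hft : f t < 0
      · exact ⟨t, ht, Or.inr (hcase hft)⟩
      · exact ⟨t, ht, Or.inl (not_lt.1 hft)⟩
    have hBclosed : IsClosed B := by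
      have : B = Set.Ici t₀ ∩ (f ⁻¹' Set.Ici 0 ∪ deriv f ⁻¹' Set.Ici 0) := by
        ext t; simp [hB, Set.mem_Ici]
      rw [this]
      exact isClosed_Ici.inter ((isClosed_Ici.preimage contf).union
        (isClosed_Ici.preimage contf'))
    have hBbdd : BddBelow B := ⟨t₀, fun t ht => ht.1⟩
    set T := sInf B with hT
    have hTB : T ∈ B := hBclosed.csInf_mem hBne hBbdd
    have hTt₀ : t₀ ≤ T := hTB.1
    have hTne : T ≠ t₀ := by
      intro hEq
      rcases hTB.2 with h' | h' <;> rw [hEq] at h' <;> linarith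
    have hTgt : t₀ < T := lt_of_le_of_ne hTt₀ (Ne.symm hTne)
    have hgood : ∀ s, t₀ ≤ s → s < T → f s < 0 ∧ deriv f s < 0 := by
      intro s hs hsT
      by_contra hc
      push_neg at hc
      have hsB : s ∈ B := by
        refine ⟨hs, ?_⟩
        by_cases hfs : f s < 0
        · exact Or.inr (hc hfs)
        · exact Or.inl (not_lt.1 hfs)
      exact absurd (csInf_le hBbdd hsB) (not_le.2 hsT)
    -- f' is strictly decreasing on [t₀, T]
    have hanti' : StrictAntiOn (deriv f) (Set.Icc t₀ T) := by
      refine strictAntiOn_of_deriv_neg (convex_Icc _ _) contf'.continuousOn ?_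
      intro s hs
      rw [interior_Icc] at hs
      obtain ⟨h1, h2⟩ := hgood s hs.1.le hs.2
      exact hdd s hs.1.le h1 h2
    have hanti : StrictAntiOn f (Set.Icc t₀ T) := by
      refine strictAntiOn_of_deriv_neg (convex_Icc _ _) contf.continuousOn ?_
      intro s hs
      rw [interior_Icc] at hs
      exact (hgood s hs.1.le hs.2).2
    have hfT : f T < 0 :=
      lt_trans (hanti (Set.left_mem_Icc.2 hTt₀) (Set.right_mem_Icc.2 hTt₀) hTgt) hi1
    have hfT' : deriv f T < 0 :=
      lt_trans (hanti' (Set.left_mem_Icc.2 hTt₀) (Set.right_mem_Icc.2 hTt₀) hTgt) hi2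
    rcases hTB.2 with h' | h' <;> linarith
  refine ⟨main, ?_⟩
  -- f' is antitone on [t₀, ∞), so f' t ≤ f' t₀ < 0
  have hanti' : AntitoneOn (deriv f) (Set.Ici t₀) := by
    refine antitoneOn_of_deriv_nonpos (convex_Ici _) contf'.continuousOn ?_ ?_
    · intro s hs
      exact (hf2 s).differentiableAt.differentiableWithinAt
    · intro s hs
      rw [interior_Ici] at hs
      obtain ⟨h1, h2⟩ := main s hs.le
      exact (hdd s hs.le h1 h2).le
  -- φ t = f t - f' t₀ * t is antitone on [t₀, ∞)
  have hφ : AntitoneOn (fun t => f t - deriv f t₀ * t) (Set.Ici t₀) := by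
    refine antitoneOn_of_deriv_nonpos (convex_Ici _)
      (contf.sub (continuous_const.mul continuous_id)).continuousOn ?_ ?_
    · intro s hs
      exact ((hf1 s).sub ((hasDerivAt_id s).const_mul (deriv f t₀))).differentiableAt.differentiableWithinAt
    · intro s hs
      rw [interior_Ici] at hs
      have hd : HasDerivAt (fun t => f t - deriv f t₀ * t) (deriv f s - deriv f t₀ * 1) s :=
        (hf1 s).sub ((hasDerivAt_id s).const_mul (deriv f t₀))
      rw [hd.deriv]
      have := hanti' (Set.mem_Ici.2 le_rfl) (Set.mem_Ici.2 (Set.mem_Ioi.1 hs).le) (Set.mem_Ioi.1 hs).le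
      linarith
  have hbound : ∀ t ≥ t₀, f t ≤ f t₀ + deriv f t₀ * (t - t₀) := by
    intro t ht
    have := hφ (Set.mem_Ici.2 le_rfl) (Set.mem_Ici.2 ht) ht
    simp only at this
    linarith
  have hlin : Tendsto (fun t => f t₀ + deriv f t₀ * (t - t₀)) atTop atBot := by
    apply tendsto_atBot_add_const_left
    have h1 : Tendsto (fun t : ℝ => t - t₀) atTop atTop := tendsto_atTop_add_const_right _ _ tendsto_id
    exact Tendsto.const_mul_atTop_of_neg hi2 h1
  exact tendsto_atBot_mono' atTop (eventually_atTop.2 ⟨t₀, hbound⟩) hlin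
end

section
/- For the AdS background f(ρ) = ρ₀ sinh(ρ/ρ₀) with ρ₀ > 0, the function w(ρ) = (tanh²(ρ/(2ρ₀)) - c)/(tanh²(ρ/(2ρ₀)) + c) with c > 0 satisfies w' + (w² - 1)/f(ρ) = 0 on (0, ∞). -/
/-!
With `g ρ = log (tanh (ρ / (2ρ₀)))`, an antiderivative of `1 / (ρ₀ sinh (ρ / ρ₀))`, the
function `w` is `tanh (g - log √c)` on `(0, ∞)`. Since `tanh' = 1 - tanh²`, any function
`tanh (g + k)` solves the Riccati equation `w' = (1 - w²) g'`.
-/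

open Real Filter Topology

theorem Real.hasDerivAt_tanh (x : ℝ) : HasDerivAt tanh (1 - tanh x ^ 2) x := by
  have hcosh : cosh x ≠ 0 := (cosh_pos x).ne'
  have h := (hasDerivAt_sinh x).div (hasDerivAt_cosh x) hcosh
  rw [show sinh / cosh = tanh from funext fun y => (tanh_eq_sinh_div_cosh y).symm] at h
  refine h.congr_deriv ?_
  rw [tanh_eq_sinh_div_cosh]
  field_simp

theorem HasDerivAt.tanh {f : ℝ → ℝ} {f' x : ℝ} (hf : HasDerivAt f f' x) :
    HasDerivAt (fun y => Real.tanh (f y)) ((1 - Real.tanh (f x) ^ 2) * f') x :=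
  (Real.hasDerivAt_tanh (f x)).comp x hf

theorem Real.tanh_pos {x : ℝ} (hx : 0 < x) : 0 < tanh x := by
  rw [tanh_eq_sinh_div_cosh]
  exact div_pos (sinh_pos_iff.mpr hx) (cosh_pos x)

theorem Real.tanh_log {t : ℝ} (ht : 0 < t) : tanh (log t) = (t ^ 2 - 1) / (t ^ 2 + 1) := by
  rw [tanh_eq, exp_neg, exp_log ht]
  field_simp

theorem Real.tanh_log_sub_log_sqrt {y c : ℝ} (hy : 0 < y) (hc : 0 < c) :
    tanh (log y - log √c) = (y ^ 2 - c) / (y ^ 2 + c) := by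
  have hsqrt : 0 < √c := sqrt_pos.mpr hc
  rw [← log_div hy.ne' hsqrt.ne', tanh_log (div_pos hy hsqrt), div_pow, sq_sqrt hc.le]
  field_simp

theorem hasDerivAt_log_tanh_div {a ρ : ℝ} (ha : a ≠ 0) (hρ : ρ ≠ 0) :
    HasDerivAt (fun r => log (tanh (r / (2 * a)))) (1 / (a * sinh (ρ / a))) ρ := by
  set u := ρ / (2 * a) with hu
  have hu0 : u ≠ 0 := div_ne_zero hρ (mul_ne_zero two_ne_zero ha)
  have hsinh : sinh u ≠ 0 := sinh_ne_zero.mpr hu0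
  have hcosh : cosh u ≠ 0 := (cosh_pos u).ne'
  have htanh : tanh u ≠ 0 := by rw [tanh_eq_sinh_div_cosh]; exact div_ne_zero hsinh hcosh
  have h := (((hasDerivAt_id' ρ).div_const (2 * a)).tanh).log htanh
  rw [← hu] at h
  refine h.congr_deriv ?_
  rw [show ρ / a = 2 * u by rw [hu]; field_simp, sinh_two_mul, tanh_eq_sinh_div_cosh]
  field_simp
  linear_combination cosh_sq u

theorem stmt17 (ρ₀ c : ℝ) (hρ₀ : 0 < ρ₀) (hc : 0 < c) (w : ℝ → ℝ)
    (hw : ∀ ρ : ℝ, w ρ = (Real.tanh (ρ/(2*ρ₀))^2 - c) / (Real.tanh (ρ/(2*ρ₀))^2 + c)) :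
    ∀ ρ > (0:ℝ), HasDerivAt w ((1 - (w ρ)^2) / (ρ₀ * Real.sinh (ρ/ρ₀))) ρ := by
  intro ρ hρ
  have hw_tanh : w =ᶠ[𝓝 ρ] fun r => tanh (log (tanh (r / (2 * ρ₀))) - log √c) := by
    filter_upwards [lt_mem_nhds hρ] with r hr
    rw [hw, tanh_log_sub_log_sqrt (tanh_pos (by positivity)) hc]
  have h := ((hasDerivAt_log_tanh_div hρ₀.ne' hρ.ne').sub_const (log √c)).tanh
  rw [← hw_tanh.eq_of_nhds] at h
  exact (h.congr_of_eventuallyEq hw_tanh).congr_deriv (mul_one_div _ _)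
end

section
/- The overdetermined system w' = -√(κp/q)(1-w²)^{q-p+1} f^{2p-2q-1} and w' = -√(q/(κp))(1-w²)^{p-q+1} f^{2q-2p-1}, with p ≠ q positive integers and κ > 0, has the solution f(ρ) = r₀ sin(ρ/ρ₀), w(ρ) = cos(ρ/ρ₀) where r₀ = (κp/q)^{1/(4(q-p))} and ρ₀ = r₀; i.e., with f = r₀ sin(ρ/r₀) and w = cos(ρ/r₀), both equations hold simultaneously. -/
/-! With `f = r₀ sin (ρ / r₀)` and `w = cos (ρ / r₀)` one has `1 - w² = (f / r₀)²` and
`w' = -(1 - w²) / f`. Substituting `1 - w² = (f / r₀)²`, each right-hand side becomes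
`-(1 - w²) / f` times a power of `r₀`, and the choice `r₀ = (κp/q) ^ (1 / (4(q - p)))` makes both
`√(κp/q)` and `√(q/(κp))` exactly the power of `r₀` that cancels it. -/

open Real

theorem sqrt_eq_zpow_of_eq_rpow {c r : ℝ} (hc : 0 ≤ c) {m : ℤ} (hm : m ≠ 0)
    (hr : r = c ^ ((1 : ℝ) / (4 * m))) : √c = r ^ (2 * m) := by
  have hm' : (m : ℝ) ≠ 0 := Int.cast_ne_zero.mpr hm
  rw [hr, ← rpow_intCast, ← rpow_mul hc, sqrt_eq_rpow]
  congr 1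
  push_cast
  field_simp
  ring

theorem zpow_two_mul_mul_sq_zpow_mul_zpow {a s : ℝ} (ha : a ≠ 0) (hs : s ≠ 0) (m : ℤ) :
    a ^ (2 * m) * (s ^ 2) ^ (m + 1) * (a * s) ^ (-(2 * m) - 1) = s / a := by
  rw [← zpow_natCast, ← zpow_mul, mul_zpow]
  calc _ = a ^ (2 * m + (-(2 * m) - 1)) * s ^ ((2 : ℕ) * (m + 1) + (-(2 * m) - 1)) := by
          rw [zpow_add₀ ha, zpow_add₀ hs]; ring
    _ = a ^ (-1 : ℤ) * s ^ (1 : ℤ) := by congr 2 <;> push_cast <;> ring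
    _ = s / a := by rw [zpow_neg_one, zpow_one, div_eq_inv_mul]

theorem hasDerivAt_cos_div_eq_zpow {r : ℝ} (hr : r ≠ 0) (m : ℤ) {x : ℝ} (hx : sin (x / r) ≠ 0) :
    HasDerivAt (fun y => cos (y / r))
      (-(r ^ (2 * m) * (1 - cos (x / r) ^ 2) ^ (m + 1) * (r * sin (x / r)) ^ (-(2 * m) - 1))) x := by
  rw [← sin_sq, zpow_two_mul_mul_sq_zpow_mul_zpow hr hx]
  exact ((hasDerivAt_id x).div_const r).cos.congr_deriv (by simp [div_eq_mul_inv])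

theorem stmt18 (p q : ℕ) (hp : 0 < p) (hq : 0 < q) (hpq : p ≠ q)
    (κ : ℝ) (hκ : 0 < κ) (r₀ : ℝ)
    (hr₀ : r₀ = (κ * p / q) ^ ((1:ℝ) / (4 * ((q:ℝ) - (p:ℝ)))))
    (f w : ℝ → ℝ)
    (hf : ∀ ρ, f ρ = r₀ * Real.sin (ρ / r₀))
    (hw : ∀ ρ, w ρ = Real.cos (ρ / r₀)) :
    ∀ ρ : ℝ, 0 < ρ → ρ < Real.pi * r₀ →
      HasDerivAt w (-(Real.sqrt (κ * p / q) * (1 - (w ρ)^2) ^ ((q:ℤ) - (p:ℤ) + 1)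
        * f ρ ^ (2*(p:ℤ) - 2*(q:ℤ) - 1))) ρ ∧
      HasDerivAt w (-(Real.sqrt ((q:ℝ) / (κ * p)) * (1 - (w ρ)^2) ^ ((p:ℤ) - (q:ℤ) + 1)
        * f ρ ^ (2*(q:ℤ) - 2*(p:ℤ) - 1))) ρ := by
  intro ρ hρ hρπ
  have hc : 0 < κ * p / q := by positivity
  have hr : 0 < r₀ := hr₀ ▸ rpow_pos_of_pos hc _
  have hsin : sin (ρ / r₀) ≠ 0 :=
    (sin_pos_of_pos_of_lt_pi (by positivity) (by rwa [div_lt_iff₀ hr])).ne'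
  have hm : (q : ℤ) - p ≠ 0 := sub_ne_zero.mpr (by exact_mod_cast hpq.symm)
  have hsqrt : √(κ * p / q) = r₀ ^ (2 * ((q : ℤ) - p)) :=
    sqrt_eq_zpow_of_eq_rpow hc.le hm (by rw [hr₀]; push_cast; rfl)
  have hsqrt_inv : √(q / (κ * p)) = r₀ ^ (2 * ((p : ℤ) - q)) := by
    rw [← inv_div, sqrt_inv, hsqrt, ← zpow_neg]
    ring_nf
  obtain rfl : w = fun x => cos (x / r₀) := funext hw
  rw [hf, hsqrt, hsqrt_inv]
  constructor
  · convert hasDerivAt_cos_div_eq_zpow hr.ne' ((q : ℤ) - p) hsin using 5; ring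
  · convert hasDerivAt_cos_div_eq_zpow hr.ne' ((p : ℤ) - q) hsin using 5; ring
end
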